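/- Let N ≥ 1 be an integer and H ≤ (ℤ/N)^× a subgroup containing −1. Define Γ_H(N) = { (a b; c d) ∈ SL₂(ℤ) : c ≡ 0 (mod N), and a mod N, d mod N ∈ H }. Then the map sending a matrix to its bottom row (c mod N, d mod N) induces a bijection between the set of right cosets Γ_H(N)\SL₂(ℤ) and the set P_H(N) = { (c,d) ∈ (ℤ/N)² : gcd(c,d,N) = 1 } / ∼, where (c,d) ∼ (hc, hd) for h ∈ H. -/

import Mathlib

open Matrix

lemma cast_val_int (N : ℕ) [NeZero N] (c : ZMod N) : (((c.val : ℤ)) : ZMod N) = c := by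
  push_cast; exact ZMod.natCast_zmod_val c

lemma nat_dvd_int {p : ℕ} {x : ℤ} (h : p ∣ x.natAbs) : (p : ℤ) ∣ x :=
  (Int.natCast_dvd_natCast.mpr h).trans (Int.natAbs_dvd.mpr dvd_rfl)

lemma int_dvd_nat {p : ℕ} {x : ℤ} (h : (p : ℤ) ∣ x) : p ∣ x.natAbs := by
  simpa using Int.natAbs_dvd_natAbs.mpr h

/-- Key lifting lemma: a unimodular pair mod `N` lifts to a coprime pair of integers. -/
lemma lift_coprime (N : ℕ) (hN : 1 ≤ N) (c d : ZMod N)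
    (h : ∃ a b : ZMod N, a * c + b * d = 1) :
    ∃ c' d' : ℤ, ((c' : ZMod N) = c) ∧ ((d' : ZMod N) = d) ∧ IsCoprime c' d' := by
  haveI : NeZero N := ⟨by omega⟩
  obtain ⟨c₀, hcc⟩ : ∃ c₀ : ℤ, ((c₀ : ℤ) : ZMod N) = c := ⟨_, cast_val_int N c⟩
  obtain ⟨d₀, hdc⟩ : ∃ d₀ : ℤ, ((d₀ : ℤ) : ZMod N) = d := ⟨_, cast_val_int N d⟩
  have hg : Nat.gcd (Int.gcd c₀ d₀) N = 1 := by
    obtain ⟨a, b, hab⟩ := h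
    obtain ⟨A, hAc⟩ : ∃ A : ℤ, ((A : ℤ) : ZMod N) = a := ⟨_, cast_val_int N a⟩
    obtain ⟨B, hBc⟩ : ∃ B : ℤ, ((B : ℤ) : ZMod N) = b := ⟨_, cast_val_int N b⟩
    have hmod : ((A * c₀ + B * d₀ - 1 : ℤ) : ZMod N) = 0 := by
      push_cast
      rw [hAc, hcc, hBc, hdc, hab]; ring
    have hdvd : (N : ℤ) ∣ (A * c₀ + B * d₀ - 1) :=
      (ZMod.intCast_zmod_eq_zero_iff_dvd _ N).mp hmod
    have h1 : ((Nat.gcd (Int.gcd c₀ d₀) N : ℕ) : ℤ) ∣ 1 := by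
      have hc' : ((Nat.gcd (Int.gcd c₀ d₀) N : ℕ) : ℤ) ∣ c₀ :=
        dvd_trans (Int.natCast_dvd_natCast.mpr (Nat.gcd_dvd_left _ _)) (Int.gcd_dvd_left _ _)
      have hd' : ((Nat.gcd (Int.gcd c₀ d₀) N : ℕ) : ℤ) ∣ d₀ :=
        dvd_trans (Int.natCast_dvd_natCast.mpr (Nat.gcd_dvd_left _ _)) (Int.gcd_dvd_right _ _)
      have hN' : ((Nat.gcd (Int.gcd c₀ d₀) N : ℕ) : ℤ) ∣ (N : ℤ) :=
        Int.natCast_dvd_natCast.mpr (Nat.gcd_dvd_right _ _)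
      have : ((Nat.gcd (Int.gcd c₀ d₀) N : ℕ) : ℤ) ∣ (A * c₀ + B * d₀) - (A * c₀ + B * d₀ - 1) :=
        dvd_sub (Dvd.dvd.add (hc'.mul_left A) (hd'.mul_left B)) (hN'.trans hdvd)
      simpa using this
    exact Nat.eq_one_of_dvd_one (Int.natCast_dvd_natCast.mp (by exact_mod_cast h1))
  by_cases hc0 : c₀ = 0
  · refine ⟨(N : ℤ), d₀, by simp [← hcc, hc0], hdc, ?_⟩
    rw [Int.isCoprime_iff_gcd_eq_one]
    subst hc0
    simp only [Int.gcd, Int.natAbs_zero, Nat.gcd_zero_left] at hg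
    simpa [Int.gcd, Nat.gcd_comm] using hg
  · set s : Finset ℕ := c₀.natAbs.primeFactors.filter (fun p => ¬ p ∣ d₀.natAbs) with hs
    set t : ℕ := ∏ p ∈ s, p with ht
    refine ⟨c₀, d₀ + N * t, hcc, by simp [hdc], ?_⟩
    rw [Int.isCoprime_iff_gcd_eq_one]
    by_contra hne
    obtain ⟨p, hp, hpdvd⟩ := Nat.exists_prime_and_dvd hne
    have hpc : (p : ℤ) ∣ c₀ := nat_dvd_int (hpdvd.trans (Nat.gcd_dvd_left _ _))
    have hpd' : (p : ℤ) ∣ (d₀ + N * t) := nat_dvd_int (hpdvd.trans (Nat.gcd_dvd_right _ _))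
    by_cases hpd : (p : ℤ) ∣ d₀
    · have hpt : ¬ p ∣ t := by
        intro hptdvd
        rw [ht] at hptdvd
        obtain ⟨q, hq, hpq⟩ := (Nat.Prime.prime hp).exists_mem_finset_dvd hptdvd
        have hq' := Finset.mem_filter.mp hq
        have : p = q := (Nat.prime_dvd_prime_iff_eq hp
          (Nat.prime_of_mem_primeFactors hq'.1)).mp hpq
        exact hq'.2 (this ▸ int_dvd_nat hpd)
      have hpNt : (p : ℤ) ∣ (N : ℤ) * t := by
        have := dvd_sub hpd' hpd; simpa using this
      have hpN : p ∣ N := by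
        rcases ((Nat.prime_iff_prime_int.mp hp).dvd_mul.mp hpNt) with h1 | h1
        · exact Int.natCast_dvd_natCast.mp h1
        · exact absurd (Int.natCast_dvd_natCast.mp h1) hpt
      have : p ∣ Nat.gcd (Int.gcd c₀ d₀) N :=
        Nat.dvd_gcd (Nat.dvd_gcd (int_dvd_nat hpc) (int_dvd_nat hpd)) hpN
      rw [hg] at this
      exact hp.one_lt.ne' (Nat.dvd_one.mp this)
    · have hps : p ∈ s := by
        rw [hs]
        refine Finset.mem_filter.mpr ⟨Nat.mem_primeFactors.mpr ⟨hp, int_dvd_nat hpc, by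
          simpa using hc0⟩, fun hd => hpd (nat_dvd_int hd)⟩
      have hpt : (p : ℤ) ∣ (N : ℤ) * t :=
        Dvd.dvd.mul_left (Int.natCast_dvd_natCast.mpr (Finset.dvd_prod_of_mem _ hps)) _
      exact hpd (by have := dvd_sub hpd' hpt; simpa using this)

section entries
variable (g g' : Matrix.SpecialLinearGroup (Fin 2) ℤ)

lemma q_entry_10 : (g * g'⁻¹).1 1 0 = g.1 1 0 * g'.1 1 1 - g.1 1 1 * g'.1 1 0 := by
  rw [show (g * g'⁻¹).1 = g.1 * (g'⁻¹).1 from rfl, Matrix.mul_apply]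
  simp [Matrix.SpecialLinearGroup.coe_mul, Matrix.mul_apply, Fin.sum_univ_two,
    Matrix.SpecialLinearGroup.SL2_inv_expl g']
  ring

lemma q_entry_11 : (g * g'⁻¹).1 1 1 = -(g.1 1 0 * g'.1 0 1) + g.1 1 1 * g'.1 0 0 := by
  rw [show (g * g'⁻¹).1 = g.1 * (g'⁻¹).1 from rfl, Matrix.mul_apply]
  simp [Matrix.SpecialLinearGroup.coe_mul, Matrix.mul_apply, Fin.sum_univ_two,
    Matrix.SpecialLinearGroup.SL2_inv_expl g']

lemma det_entries : g.1 0 0 * g.1 1 1 - g.1 0 1 * g.1 1 0 = 1 := by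
  have := g.2
  rwa [Matrix.det_fin_two] at this

lemma row_mul (q : Matrix.SpecialLinearGroup (Fin 2) ℤ) (j : Fin 2) :
    (q * g').1 1 j = q.1 1 0 * g'.1 0 j + q.1 1 1 * g'.1 1 j := by
  simp [Matrix.SpecialLinearGroup.coe_mul, Matrix.mul_apply, Fin.sum_univ_two]

end entries

/-- The `H`-orbit of the bottom row of `g ∈ SL₂(ℤ)`, reduced mod `N`. -/
def bottomOrbit (N : ℕ) (H : Subgroup (ZMod N)ˣ)
    (g : Matrix.SpecialLinearGroup (Fin 2) ℤ) : Set (ZMod N × ZMod N) :=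
  {w | ∃ h ∈ H, w = ((h : ZMod N) * ((g.1 1 0 : ℤ) : ZMod N),
                     (h : ZMod N) * ((g.1 1 1 : ℤ) : ZMod N))}

/-- `P_H(N)`: unimodular pairs `(c,d) ∈ (ℤ/N)²` (i.e. with `gcd(c,d,N)=1`) modulo the
scaling action of `H`, realized as the set of `H`-orbits. -/
def PH (N : ℕ) (H : Subgroup (ZMod N)ˣ) : Set (Set (ZMod N × ZMod N)) :=
  {A | ∃ c d : ZMod N, (∃ a b : ZMod N, a * c + b * d = 1) ∧
    A = {w | ∃ h ∈ H, w = ((h : ZMod N) * c, (h : ZMod N) * d)}}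

/-- Membership in the congruence subgroup `Γ_H(N) ⊆ SL₂(ℤ)`: `c ≡ 0 (mod N)` and the
reductions of `a` and `d` lie in `H`. -/
def memGammaH (N : ℕ) (H : Subgroup (ZMod N)ˣ)
    (g : Matrix.SpecialLinearGroup (Fin 2) ℤ) : Prop :=
  ((g.1 1 0 : ℤ) : ZMod N) = 0 ∧
    (∃ h ∈ H, ((h : (ZMod N)ˣ) : ZMod N) = ((g.1 0 0 : ℤ) : ZMod N)) ∧
    (∃ h ∈ H, ((h : (ZMod N)ˣ) : ZMod N) = ((g.1 1 1 : ℤ) : ZMod N))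

/-- For `N ≥ 1` and a subgroup `H ≤ (ℤ/N)ˣ` containing `-1`, the map
sending a matrix to the `H`-orbit of its bottom row mod `N` induces a bijection
`Γ_H(N)\SL₂(ℤ) ≃ P_H(N)`: it takes values in `P_H(N)`, is surjective onto `P_H(N)`,
and two matrices have the same image iff they lie in the same right coset of `Γ_H(N)`. -/
theorem stmt17 (N : ℕ) (hN : 1 ≤ N) (H : Subgroup (ZMod N)ˣ)
    (hH : (-1 : (ZMod N)ˣ) ∈ H) :
    (∀ g : Matrix.SpecialLinearGroup (Fin 2) ℤ, bottomOrbit N H g ∈ PH N H) ∧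
    (∀ A ∈ PH N H, ∃ g : Matrix.SpecialLinearGroup (Fin 2) ℤ, bottomOrbit N H g = A) ∧
    (∀ g g' : Matrix.SpecialLinearGroup (Fin 2) ℤ,
      bottomOrbit N H g = bottomOrbit N H g' ↔ memGammaH N H (g * g'⁻¹)) := by
  refine ⟨?_, ?_, ?_⟩
  · -- value in PH
    intro g
    refine ⟨((g.1 1 0 : ℤ) : ZMod N), ((g.1 1 1 : ℤ) : ZMod N),
      ⟨-((g.1 0 1 : ℤ) : ZMod N), ((g.1 0 0 : ℤ) : ZMod N), ?_⟩, rfl⟩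
    have h1 : ((g.1 0 0 * g.1 1 1 - g.1 0 1 * g.1 1 0 : ℤ) : ZMod N) = 1 := by
      rw [det_entries]; simp
    push_cast at h1
    linear_combination h1
  · -- surjective onto PH
    rintro A ⟨c, d, hcd, rfl⟩
    obtain ⟨c', d', hc', hd', hcop⟩ := lift_coprime N hN c d hcd
    obtain ⟨u, v, huv⟩ := hcop
    refine ⟨⟨!![v, -u; c', d'], by rw [Matrix.det_fin_two]; simp; linarith⟩, ?_⟩
    unfold bottomOrbit
    congr 1
    simp only [Matrix.cons_val', Matrix.cons_val_zero, Matrix.cons_val_one, Matrix.head_cons,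
      Matrix.head_fin_const, Matrix.cons_val_fin_one, Matrix.of_apply]
    rw [hc', hd']
  · -- coset criterion
    intro g g'
    have hdet' : ((g'.1 0 0 * g'.1 1 1 - g'.1 0 1 * g'.1 1 0 : ℤ) : ZMod N) = 1 := by
      rw [det_entries]; simp
    push_cast at hdet'
    constructor
    · intro horb
      have hmem : (((g.1 1 0 : ℤ) : ZMod N), ((g.1 1 1 : ℤ) : ZMod N)) ∈ bottomOrbit N H g' := by
        rw [← horb]
        exact ⟨1, H.one_mem, by simp⟩
      obtain ⟨h, hh, heq⟩ := hmem
      have e1 : ((g.1 1 0 : ℤ) : ZMod N) = (h : ZMod N) * ((g'.1 1 0 : ℤ) : ZMod N) :=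
        congrArg Prod.fst heq
      have e2 : ((g.1 1 1 : ℤ) : ZMod N) = (h : ZMod N) * ((g'.1 1 1 : ℤ) : ZMod N) :=
        congrArg Prod.snd heq
      have hq10 : (((g * g'⁻¹).1 1 0 : ℤ) : ZMod N) = 0 := by
        rw [q_entry_10]; push_cast
        rw [e1, e2]; ring
      have hq11 : (((g * g'⁻¹).1 1 1 : ℤ) : ZMod N) = (h : ZMod N) := by
        rw [q_entry_11]; push_cast
        rw [e1, e2]
        linear_combination (h : ZMod N) * hdet'
      refine ⟨hq10, ⟨h⁻¹, H.inv_mem hh, ?_⟩, ⟨h, hh, hq11.symm⟩⟩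
      -- show ↑h⁻¹ = cast of q00
      have hdetq : (((g * g'⁻¹).1 0 0 * (g * g'⁻¹).1 1 1 -
          (g * g'⁻¹).1 0 1 * (g * g'⁻¹).1 1 0 : ℤ) : ZMod N) = 1 := by
        rw [det_entries]; simp
      push_cast at hdetq
      rw [hq10, hq11] at hdetq
      have h00 : (((g * g'⁻¹).1 0 0 : ℤ) : ZMod N) * (h : ZMod N) = 1 := by
        linear_combination hdetq
      calc ((h⁻¹ : (ZMod N)ˣ) : ZMod N)
          = ((h⁻¹ : (ZMod N)ˣ) : ZMod N) * ((((g * g'⁻¹).1 0 0 : ℤ) : ZMod N) * (h : ZMod N)) := by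
            rw [h00, mul_one]
        _ = (((g * g'⁻¹).1 0 0 : ℤ) : ZMod N) * (((h⁻¹ : (ZMod N)ˣ) : ZMod N) * (h : ZMod N)) := by
            ring
        _ = (((g * g'⁻¹).1 0 0 : ℤ) : ZMod N) := by
            rw [← Units.val_mul, inv_mul_cancel, Units.val_one, mul_one]
    · rintro ⟨hq10, -, h2, hh2, hq11⟩
      have hgq : g = (g * g'⁻¹) * g' := by group
      have E0 : ((g.1 1 0 : ℤ) : ZMod N) = (h2 : ZMod N) * ((g'.1 1 0 : ℤ) : ZMod N) := by
        conv_lhs => rw [hgq]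
        rw [row_mul]; push_cast
        rw [hq10, hq11]; ring
      have E1 : ((g.1 1 1 : ℤ) : ZMod N) = (h2 : ZMod N) * ((g'.1 1 1 : ℤ) : ZMod N) := by
        conv_lhs => rw [hgq]
        rw [row_mul]; push_cast
        rw [hq10, hq11]; ring
      ext w
      simp only [bottomOrbit, Set.mem_setOf_eq]
      constructor
      · rintro ⟨h, hh, rfl⟩
        exact ⟨h * h2, H.mul_mem hh hh2, by rw [Units.val_mul, E0, E1]; ring_nf⟩
      · rintro ⟨h, hh, rfl⟩
        refine ⟨h * h2⁻¹, H.mul_mem hh (H.inv_mem hh2), ?_⟩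
        have key : ((h * h2⁻¹ : (ZMod N)ˣ) : ZMod N) * (h2 : ZMod N) = (h : ZMod N) := by
          rw [← Units.val_mul]
          congr 1
          group
        rw [E0, E1, ← mul_assoc, key, ← mul_assoc, key]
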